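/- Let Y_1, Y_2, … be random vectors in ℝ^K such that √n(Y_n − μ) converges in distribution to N(0, Σ) for some μ ∈ ℝ^K and positive definite Σ ∈ ℝ^{K×K}. Let (α_n) be a sequence of positive reals with α_n → ∞ and α_n/√n → 0 as n → ∞. Define Y_n* = min_k Y_{nk} and μ* = min_k μ_k. Then for every k ∈ {1, …, K}, exp(−α_n (Y_{nk} − Y_n*)) converges in probability to the indicator 𝟙(μ_k = μ*). -/

import Mathlib

open MeasureTheory Filter Topology

/-- `ν` is the multivariate normal distribution on `ℝ^K` with mean `m` and covariance
matrix `S`, characterized via one-dimensional projections. -/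
def IsGaussianLaw {K : ℕ} (ν : Measure (EuclideanSpace ℝ (Fin K)))
    (m : EuclideanSpace ℝ (Fin K)) (S : Matrix (Fin K) (Fin K) ℝ) : Prop :=
  ∀ a : Fin K → ℝ,
    Measure.map (fun x => ∑ i, a i * x i) ν
      = ProbabilityTheory.gaussianReal (∑ i, a i * m i)
          (Real.toNNReal (∑ i, ∑ j, a i * S i j * a j))

/-- Convergence in distribution via bounded continuous test functions. -/
def TendstoInDistribution {Ω E : Type*} [MeasurableSpace Ω] [MeasurableSpace E]
    [TopologicalSpace E] (P : Measure Ω) (V : ℕ → Ω → E) (ν : Measure E) : Prop :=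
  ∀ f : BoundedContinuousFunction E ℝ,
    Tendsto (fun n => ∫ ω, f (V n ω) ∂P) atTop (𝓝 (∫ x, f x ∂ν))

/-!
Write `G_n = Y_{nk} - Y_n*` and `g = μ_k - μ*`. A gap `x_k - min_j x_j` is a 2-Lipschitz
function of `x`, and `t ↦ exp (-t)` is 1-Lipschitz on `[0, ∞)`, so
`|exp (-α_n G_n) - exp (-α_n g)| ≤ 2 α_n ‖Y_n - μ‖ = 2 (α_n / √n) ‖√n (Y_n - μ)‖`.
A sequence converging in distribution is tight, so multiplying it by `α_n / √n → 0` yields a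
sequence tending to `0` in probability. Finally `exp (-α_n g)` is constantly `1` if `g = 0` and
tends to `0` if `g > 0`, because `α_n → ∞`.
-/

lemma Real.abs_exp_neg_sub_exp_neg_le {s t : ℝ} (hs : 0 ≤ s) (ht : 0 ≤ t) :
    |Real.exp (-s) - Real.exp (-t)| ≤ |s - t| := by
  wlog hst : s ≤ t generalizing s t
  · rw [abs_sub_comm, abs_sub_comm s]
    exact this ht hs (le_of_not_ge hst)
  have hdecay : Real.exp (-t) ≤ Real.exp (-s) := Real.exp_le_exp.2 (neg_le_neg hst)
  rw [abs_of_nonneg (sub_nonneg.2 hdecay), abs_of_nonpos (sub_nonpos.2 hst)]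
  calc Real.exp (-s) - Real.exp (-t) = Real.exp (-s) * (1 - Real.exp (-(t - s))) := by
        rw [mul_sub, ← Real.exp_add]; ring_nf
    _ ≤ 1 * (t - s) := by
        refine mul_le_mul (Real.exp_le_one_iff.2 (neg_nonpos.2 hs)) ?_ ?_ zero_le_one
        · linarith [Real.one_sub_le_exp_neg (t - s)]
        · linarith [Real.exp_le_one_iff.2 (neg_nonpos.2 (sub_nonneg.2 hst))]
    _ = -(s - t) := by ring

section Gap

variable {ι : Type*} [Finite ι]

lemma abs_ciInf_sub_ciInf_le [Nonempty ι] {x y : ι → ℝ} {C : ℝ}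
    (h : ∀ j, |x j - y j| ≤ C) : |(⨅ j, x j) - ⨅ j, y j| ≤ C := by
  have hinf_le : ∀ {x y : ι → ℝ}, (∀ j, |x j - y j| ≤ C) →
      (⨅ j, x j) ≤ (⨅ j, y j) + C :=
    fun {x y} h => sub_le_iff_le_add.1 <| le_ciInf fun j =>
      sub_le_iff_le_add.2 <| (ciInf_le (Set.finite_range x).bddBelow j).trans
        (by linarith [(abs_le.1 (h j)).2])
  rw [abs_sub_le_iff]
  constructor
  · linarith [hinf_le h]
  · linarith [hinf_le (fun j => (abs_sub_comm (y j) (x j)).trans_le (h j))]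

lemma abs_sub_ciInf_sub_sub_ciInf_le {x y : ι → ℝ} {C : ℝ} (h : ∀ j, |x j - y j| ≤ C)
    (k : ι) : |(x k - ⨅ j, x j) - (y k - ⨅ j, y j)| ≤ 2 * C := by
  have : Nonempty ι := ⟨k⟩
  calc |(x k - ⨅ j, x j) - (y k - ⨅ j, y j)|
        = |(x k - y k) - ((⨅ j, x j) - ⨅ j, y j)| := by ring_nf
    _ ≤ |x k - y k| + |(⨅ j, x j) - ⨅ j, y j| := abs_sub _ _
    _ ≤ 2 * C := by linarith [h k, abs_ciInf_sub_ciInf_le h]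

lemma sub_ciInf_nonneg (x : ι → ℝ) (k : ι) : 0 ≤ x k - ⨅ j, x j :=
  sub_nonneg.2 (ciInf_le (Set.finite_range x).bddBelow k)

lemma tendsto_exp_neg_mul_sub_ciInf {κ : Type*} {l : Filter κ} {a : κ → ℝ}
    (ha : Tendsto a l atTop) (x : ι → ℝ) (k : ι) :
    Tendsto (fun i => Real.exp (-(a i) * (x k - ⨅ j, x j))) l
      (𝓝 (if x k = ⨅ j, x j then 1 else 0)) := by
  by_cases hmin : x k = ⨅ j, x j
  · simp only [hmin, sub_self, mul_zero, Real.exp_zero, if_true]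
    exact tendsto_const_nhds
  · have hpos : 0 < x k - ⨅ j, x j :=
      (sub_ciInf_nonneg x k).lt_of_ne (sub_ne_zero.2 hmin).symm
    simpa only [hmin, if_false, neg_mul, Function.comp_def] using
      Real.tendsto_exp_neg_atTop_nhds_zero.comp (ha.atTop_mul_const hpos)

lemma abs_exp_neg_mul_sub_ciInf_sub_le {p : ENNReal} [Fact (1 ≤ p)] [Fintype ι]
    (x y : PiLp p fun _ : ι => ℝ) (k : ι) {a : ℝ} (ha : 0 ≤ a) :
    |Real.exp (-a * (x k - ⨅ j, x j)) - Real.exp (-a * (y k - ⨅ j, y j))|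
      ≤ 2 * ‖a • (x - y)‖ := by
  have hcoord : ∀ j, |x j - y j| ≤ dist x y := fun j =>
    (Real.dist_eq _ _).symm.trans_le (PiLp.dist_apply_le _ _ j)
  rw [neg_mul, neg_mul, norm_smul, Real.norm_of_nonneg ha, ← dist_eq_norm]
  calc _ ≤ |a * (x k - ⨅ j, x j) - a * (y k - ⨅ j, y j)| :=
        Real.abs_exp_neg_sub_exp_neg_le (mul_nonneg ha (sub_ciInf_nonneg _ k))
          (mul_nonneg ha (sub_ciInf_nonneg _ k))
    _ = a * |(x k - ⨅ j, x j) - (y k - ⨅ j, y j)| := by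
        rw [← mul_sub, abs_mul, abs_of_nonneg ha]
    _ ≤ a * (2 * dist x y) := by
        gcongr
        exact abs_sub_ciInf_sub_sub_ciInf_le hcoord k
    _ = 2 * (a * dist x y) := by ring

end Gap

lemma tendstoInMeasure_const_of_dist_le {Ω ι E F : Type*} [MeasurableSpace Ω]
    {P : Measure Ω} {l : Filter ι} [PseudoMetricSpace E] [PseudoMetricSpace F]
    {f : ι → Ω → E} {a : ι → E} {c : E} {X : ι → Ω → F} {x₀ : F} {C : ℝ} (hC : 0 < C)
    (hX : TendstoInMeasure P X l fun _ => x₀)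
    (ha : Tendsto a l (𝓝 c)) (hle : ∀ i ω, dist (f i ω) (a i) ≤ C * dist (X i ω) x₀) :
    TendstoInMeasure P f l fun _ => c := by
  rw [tendstoInMeasure_iff_dist] at hX ⊢
  intro ε hε
  refine tendsto_of_tendsto_of_tendsto_of_le_of_le' tendsto_const_nhds
    (hX (ε / (2 * C)) (by positivity)) (Eventually.of_forall fun _ => zero_le) ?_
  filter_upwards [ha (Metric.ball_mem_nhds c (half_pos hε))] with i (hi : dist (a i) c < ε / 2)
  refine measure_mono fun ω (hω : ε ≤ dist (f i ω) c) => ?_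
  have hfar : ε / 2 ≤ C * dist (X i ω) x₀ := by
    linarith [dist_triangle (f i ω) (a i) c, hle i ω]
  show ε / (2 * C) ≤ dist (X i ω) x₀
  rw [div_le_iff₀ (by positivity)]
  linarith

lemma tendsto_measureReal_norm_gt_atTop {E : Type*} [NormedAddCommGroup E] [MeasurableSpace E]
    [OpensMeasurableSpace E] (ν : Measure E) [IsFiniteMeasure ν] :
    Tendsto (fun r : ℝ => ν.real {x | r < ‖x‖}) atTop (𝓝 0) := by
  have h := tendsto_measure_iInter_atTop (μ := ν) (s := fun r : ℝ => {x : E | r < ‖x‖})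
    (fun _ => (measurableSet_lt measurable_const measurable_norm).nullMeasurableSet)
    (fun _ _ hrs _ hx => lt_of_le_of_lt hrs hx) ⟨0, measure_ne_top _ _⟩
  have hempty : ⋂ r : ℝ, {x : E | r < ‖x‖} = ∅ :=
    Set.eq_empty_of_forall_notMem fun x hx => lt_irrefl ‖x‖ (Set.mem_iInter.1 hx ‖x‖)
  rw [hempty, measure_empty] at h
  simpa [Function.comp_def, measureReal_def] using
    (ENNReal.tendsto_toReal ENNReal.zero_ne_top).comp h

section NormCutoff

variable (E : Type*) [NormedAddCommGroup E]

def normCutoff (r : ℝ) : BoundedContinuousFunction E ℝ :=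
  .ofNormedAddCommGroup (fun x => max 0 (min 1 (r + 1 - ‖x‖)))
    (continuous_const.max (continuous_const.min (continuous_const.sub continuous_norm))) 1
    fun x => by
      rw [Real.norm_eq_abs, abs_of_nonneg (le_max_left _ _)]
      exact max_le zero_le_one (min_le_left _ _)

variable {E}

lemma normCutoff_apply (r : ℝ) (x : E) : normCutoff E r x = max 0 (min 1 (r + 1 - ‖x‖)) := rfl

lemma normCutoff_nonneg (r : ℝ) (x : E) : 0 ≤ normCutoff E r x := le_max_left _ _

lemma normCutoff_le_one (r : ℝ) (x : E) : normCutoff E r x ≤ 1 :=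
  max_le zero_le_one (min_le_left _ _)

lemma normCutoff_eq_one {r : ℝ} {x : E} (hx : ‖x‖ ≤ r) : normCutoff E r x = 1 := by
  rw [normCutoff_apply, min_eq_left (by linarith), max_eq_right zero_le_one]

lemma normCutoff_eq_zero {r : ℝ} {x : E} (hx : r + 1 ≤ ‖x‖) : normCutoff E r x = 0 := by
  rw [normCutoff_apply, max_eq_left (min_le_of_right_le (by linarith))]

end NormCutoff

section Tightness

variable {Ω E : Type*} [MeasurableSpace Ω] {P : Measure Ω} [IsProbabilityMeasure P]
  [NormedAddCommGroup E] [MeasurableSpace E] [OpensMeasurableSpace E]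
  {ν : Measure E} [IsProbabilityMeasure ν] {V : ℕ → Ω → E}

lemma one_sub_integral_normCutoff_le (r : ℝ) :
    1 - ∫ x, normCutoff E r x ∂ν ≤ ν.real {x | r < ‖x‖} := by
  have hS : MeasurableSet {x : E | r < ‖x‖} := measurableSet_lt measurable_const measurable_norm
  have hint := (normCutoff E r).integrable ν
  calc 1 - ∫ x, normCutoff E r x ∂ν = ∫ x, (1 - normCutoff E r x) ∂ν := by
        rw [integral_sub (integrable_const _) hint, integral_const, probReal_univ, one_smul]
    _ ≤ ∫ x, Set.indicator {x | r < ‖x‖} 1 x ∂ν :=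
        integral_mono ((integrable_const _).sub hint) ((integrable_const 1).indicator hS)
          fun x => ?_
    _ = ν.real {x | r < ‖x‖} := integral_indicator_one hS
  by_cases hx : r < ‖x‖
  · simp [Set.indicator_of_mem (show x ∈ {x : E | r < ‖x‖} from hx), normCutoff_nonneg]
  · simp [Set.indicator_of_notMem (show x ∉ {x : E | r < ‖x‖} from hx),
      normCutoff_eq_one (le_of_not_gt hx)]

lemma TendstoInDistribution.exists_eventually_measureReal_norm_ge_lt
    (hV : TendstoInDistribution P V ν) {δ : ℝ} (hδ : 0 < δ) :
    ∃ R, ∀ᶠ n in atTop, P.real {ω | R ≤ ‖V n ω‖} < δ := by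
  obtain ⟨r, hr⟩ := ((tendsto_measureReal_norm_gt_atTop ν).eventually
    (gt_mem_nhds (half_pos (lt_min hδ one_pos)))).exists
  have hlim : 1 - min δ 1 < ∫ x, normCutoff E r x ∂ν := by
    linarith [one_sub_integral_normCutoff_le (ν := ν) r, lt_min hδ one_pos]
  refine ⟨r + 1, ?_⟩
  filter_upwards [(hV (normCutoff E r)).eventually (lt_mem_nhds hlim)] with n hn
  -- a non-integrable integrand would have integral `0`
  have hint : Integrable (fun ω => normCutoff E r (V n ω)) P := by
    apply Integrable.of_integral_ne_zero
    linarith [min_le_right δ 1]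
  have hmarkov := mul_meas_ge_le_integral_of_nonneg
    (Eventually.of_forall fun ω => sub_nonneg.2 (normCutoff_le_one r (V n ω)))
    ((integrable_const 1).sub hint) 1
  rw [one_mul, integral_sub (integrable_const _) hint, integral_const, probReal_univ,
    one_smul] at hmarkov
  calc P.real {ω | r + 1 ≤ ‖V n ω‖}
      ≤ P.real {ω | 1 ≤ 1 - normCutoff E r (V n ω)} :=
        measureReal_mono fun ω (hω : r + 1 ≤ ‖V n ω‖) => by
          simp [normCutoff_eq_zero hω]
    _ < δ := by linarith [min_le_left δ 1]

theorem TendstoInDistribution.tendstoInMeasure_smul_zero [NormedSpace ℝ E]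
    (hV : TendstoInDistribution P V ν) {c : ℕ → ℝ} (hc : Tendsto c atTop (𝓝 0)) :
    TendstoInMeasure P (fun n ω => c n • V n ω) atTop 0 := by
  rw [tendstoInMeasure_iff_measureReal_norm]
  intro ε hε
  refine tendsto_order.2 ⟨fun a ha => Eventually.of_forall fun _ => ha.trans_le measureReal_nonneg,
    fun δ hδ => ?_⟩
  obtain ⟨R, hR⟩ := hV.exists_eventually_measureReal_norm_ge_lt hδ
  have hcR : ∀ᶠ n in atTop, ‖c n‖ * R < ε :=
    (hc.norm.mul_const R).eventually (gt_mem_nhds (by simpa using hε))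
  filter_upwards [hR, hcR] with n hn hcn
  refine (measureReal_mono fun ω (hω : ε ≤ ‖c n • V n ω - 0‖) => ?_).trans_lt hn
  show R ≤ ‖V n ω‖
  by_contra! hlt
  rw [sub_zero, norm_smul] at hω
  nlinarith [norm_nonneg (c n)]

end Tightness

theorem stmt8_general {K : ℕ}
    {Ω : Type*} [MeasurableSpace Ω] (P : Measure Ω) [IsProbabilityMeasure P]
    (Y : ℕ → Ω → EuclideanSpace ℝ (Fin K))
    (μ : EuclideanSpace ℝ (Fin K))
    (ν : Measure (EuclideanSpace ℝ (Fin K))) [IsProbabilityMeasure ν]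
    (hclt : TendstoInDistribution P (fun n ω => (Real.sqrt n) • (Y n ω - μ)) ν)
    (α : ℕ → ℝ) (hαpos : ∀ n, 0 < α n)
    (hAlphaTop : Tendsto α atTop atTop)
    (hαn : Tendsto (fun n => α n / Real.sqrt n) atTop (𝓝 0)) :
    ∀ k : Fin K,
      TendstoInMeasure P
        (fun n ω => Real.exp (-(α n) * (Y n ω k - sInf (Set.range fun j => Y n ω j))))
        atTop
        (fun _ => if μ k = sInf (Set.range fun j => μ j) then (1 : ℝ) else 0) := by
  intro k
  simp only [sInf_range]
  have hscaled : TendstoInMeasure P (fun n ω => α n • (Y n ω - μ)) atTop 0 := by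
    refine (hclt.tendstoInMeasure_smul_zero hαn).congr' ?_ .rfl
    filter_upwards [eventually_gt_atTop 0] with n hn
    refine .of_forall fun ω => ?_
    simp only [smul_smul, div_mul_cancel₀ _ (Real.sqrt_pos.2 (Nat.cast_pos.2 hn)).ne']
  refine tendstoInMeasure_const_of_dist_le (x₀ := 0) two_pos hscaled
    (tendsto_exp_neg_mul_sub_ciInf hAlphaTop μ k) fun n ω => ?_
  rw [Real.dist_eq, dist_zero_right]
  exact abs_exp_neg_mul_sub_ciInf_sub_le (Y n ω) μ k (hαpos n).le

/-- Suppose `√n (Y_n − μ) ⇒ N(0, Σ)` with `Σ` positive definite, and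
let `α_n > 0` with `α_n → ∞` and `α_n / √n → 0`.  With `Y_n* = min_k Y_{nk}` and
`μ* = min_k μ_k`, for every `k` the soft-selection score
`exp(−α_n (Y_{nk} − Y_n*))` converges in probability to `𝟙(μ_k = μ*)`. -/
theorem stmt8 {K : ℕ} (hK : 1 ≤ K)
    {Ω : Type*} [MeasurableSpace Ω] (P : Measure Ω) [IsProbabilityMeasure P]
    (Y : ℕ → Ω → EuclideanSpace ℝ (Fin K))
    (μ : EuclideanSpace ℝ (Fin K)) (Sig : Matrix (Fin K) (Fin K) ℝ) (hSig : Sig.PosDef)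
    (ν : Measure (EuclideanSpace ℝ (Fin K))) [IsProbabilityMeasure ν]
    (hν : IsGaussianLaw ν 0 Sig)
    (hclt : TendstoInDistribution P (fun n ω => (Real.sqrt n) • (Y n ω - μ)) ν)
    (α : ℕ → ℝ) (hαpos : ∀ n, 0 < α n)
    (hAlphaTop : Tendsto α atTop atTop)
    (hαn : Tendsto (fun n => α n / Real.sqrt n) atTop (𝓝 0)) :
    ∀ k : Fin K,
      TendstoInMeasure P
        (fun n ω => Real.exp (-(α n) * (Y n ω k - sInf (Set.range fun j => Y n ω j))))
        atTop
        (fun _ => if μ k = sInf (Set.range fun j => μ j) then (1 : ℝ) else 0) :=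
  stmt8_general P Y μ ν hclt α hαpos hAlphaTop hαn
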